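/- Let 0 < p < 1, let l ≥ 1, and let k be the integer with 2^{k-1} < l ≤ 2^k. Then S_p(m+l) + S_p(m-l) - 2 S_p(m) = l^{p+1} if and only if l = 2^k and m ≡ l (mod 2^{k+1}). -/

import Mathlib

open Finset

/-- Weighted binary digit sum: `s_p(n) = ∑_j 2^{pj} ε_j(n)`. -/
noncomputable def sWeight (p : ℝ) (n : ℕ) : ℝ :=
  ∑ j ∈ Finset.range n, if n.testBit j then (2:ℝ) ^ (p * (j:ℝ)) else 0

/-- `S_p(n) = ∑_{m=0}^{n-1} s_p(m)`. -/
noncomputable def SWeight (p : ℝ) (n : ℕ) : ℝ :=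
  ∑ m ∈ Finset.range n, sWeight p m

/-!
Write `T(a, l) = S_p(a + 2l) + S_p(a) - 2 S_p(a + l)`. Since `s_p(2n) = 2^p s_p(n)` and
`s_p(2n + 1) = 2^p s_p(n) + 1`, `T` satisfies recursions that halve the step `l`:
`T(2a, 2l) = 2^{p+1} T(a, l)`, `T(2a + 1, 2l) = 2^p (T(a, l) + T(a + 1, l))`, and for an odd step
`T(a, 2l + 1) ≤ 2^p (T(b, l) + T(c, l + 1)) + 1 - 2^p` for suitable `b, c`. Starting from
`T(a, 1) = s_p(a + 1) - s_p(a) ≤ 1`, with equality iff `a` is even, strong induction on `l` gives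
`T(a, l) ≤ l^{p+1}`. For odd `l ≥ 3` the bound is strict, because
`2^p (x^{p+1} + (x + 1)^{p+1}) + 1 - 2^p < (2x + 1)^{p+1}` for `x > 0`: by strict concavity of
`t ↦ t^p`, the function `x^{p+1} + (x + 1)^{p+1} - 2 (x + 1/2)^{p+1}` is strictly decreasing.
Following the equality case through the even steps, `T(a, l) = l^{p+1}` exactly when `l` is a
power of two and `2l ∣ a`.
-/

lemma sWeight_eq_sum_range_of_le (p : ℝ) {n N : ℕ} (h : n ≤ N) :
    sWeight p n = ∑ j ∈ range N, if n.testBit j then (2:ℝ) ^ (p * j) else 0 := by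
  refine sum_subset (range_subset_range.2 h) fun j _ hj => ?_
  rw [Nat.testBit_eq_false_of_lt ((Nat.lt_two_pow_self).trans_le
    (Nat.pow_le_pow_right two_pos (not_lt.1 (mem_range.not.1 hj))))]
  rfl

lemma sWeight_two_mul_add (p : ℝ) (n : ℕ) {b : ℕ} (hb : b < 2) :
    sWeight p (2 * n + b) = 2 ^ p * sWeight p n + b := by
  rw [sWeight_eq_sum_range_of_le p (Nat.le_succ (2 * n + b)),
    sWeight_eq_sum_range_of_le p (show n ≤ 2 * n + b by omega), mul_sum, sum_range_succ']
  have low : (2 * n + b).testBit 0 = decide (b = 1) := by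
    simp only [Nat.testBit_zero, decide_eq_decide]; omega
  have high (j : ℕ) : (2 * n + b).testBit (j + 1) = n.testBit j := by
    rw [Nat.testBit_succ]; congr 1; omega
  congr 1
  · refine sum_congr rfl fun j _ => ?_
    rw [high, Nat.cast_succ, mul_add_one, Real.rpow_add two_pos]
    split_ifs <;> simp [mul_comm]
  · interval_cases b <;> simp [low]

lemma sWeight_two_mul (p : ℝ) (n : ℕ) : sWeight p (2 * n) = 2 ^ p * sWeight p n := by
  simpa using sWeight_two_mul_add p n two_pos

lemma sWeight_two_mul_add_one (p : ℝ) (n : ℕ) :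
    sWeight p (2 * n + 1) = 2 ^ p * sWeight p n + 1 := by
  simpa using sWeight_two_mul_add p n one_lt_two

lemma sWeight_two_mul_add_two_sub (p : ℝ) (n : ℕ) :
    sWeight p (2 * n + 2) - sWeight p (2 * n + 1) =
      2 ^ p * (sWeight p (n + 1) - sWeight p n) - 1 := by
  rw [show 2 * n + 2 = 2 * (n + 1) by ring, sWeight_two_mul, sWeight_two_mul_add_one]
  ring

lemma sWeight_succ_sub_le {p : ℝ} (hp : p ≤ 1) (n : ℕ) :
    sWeight p (n + 1) - sWeight p n ≤ 1 := by
  induction n using Nat.strong_induction_on with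
  | _ n ih =>
    obtain ⟨u, rfl | rfl⟩ := Nat.even_or_odd' n
    · rw [sWeight_two_mul_add_one, sWeight_two_mul]; simp
    · have h2p : (2 : ℝ) ^ p ≤ 2 := by
        simpa using Real.rpow_le_rpow_of_exponent_le one_le_two hp
      rw [sWeight_two_mul_add_two_sub]
      nlinarith [ih u (by omega), Real.rpow_nonneg zero_le_two p]

lemma sWeight_succ_sub_eq_one_iff {p : ℝ} (hp : p < 1) (n : ℕ) :
    sWeight p (n + 1) - sWeight p n = 1 ↔ Even n := by
  obtain ⟨u, rfl | rfl⟩ := Nat.even_or_odd' n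
  · simp [sWeight_two_mul_add_one, sWeight_two_mul]
  · have h2p : (2 : ℝ) ^ p < 2 := by simpa using Real.rpow_lt_rpow_of_exponent_lt one_lt_two hp
    have hlt : sWeight p (2 * u + 2) - sWeight p (2 * u + 1) < 1 := by
      rw [sWeight_two_mul_add_two_sub]
      nlinarith [sWeight_succ_sub_le hp.le u, Real.rpow_nonneg zero_le_two p]
    simpa [Nat.not_even_iff_odd] using hlt.ne

lemma SWeight_succ (p : ℝ) (n : ℕ) : SWeight p (n + 1) = SWeight p n + sWeight p n :=
  sum_range_succ _ n

lemma SWeight_two_mul (p : ℝ) (n : ℕ) : SWeight p (2 * n) = 2 * 2 ^ p * SWeight p n + n := by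
  induction n with
  | zero => simp [SWeight]
  | succ n ih =>
    rw [show 2 * (n + 1) = 2 * n + 1 + 1 by ring, SWeight_succ, SWeight_succ, ih,
      sWeight_two_mul, sWeight_two_mul_add_one, SWeight_succ]
    push_cast
    ring

lemma SWeight_two_mul_add_one (p : ℝ) (n : ℕ) :
    SWeight p (2 * n + 1) = 2 * 2 ^ p * SWeight p n + n + 2 ^ p * sWeight p n := by
  rw [SWeight_succ, SWeight_two_mul, sWeight_two_mul]

noncomputable def secondDiff (p : ℝ) (a l : ℕ) : ℝ :=
  SWeight p (a + 2 * l) + SWeight p a - 2 * SWeight p (a + l)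

lemma secondDiff_one (p : ℝ) (a : ℕ) : secondDiff p a 1 = sWeight p (a + 1) - sWeight p a := by
  rw [secondDiff, show a + 2 * 1 = a + 1 + 1 by ring, SWeight_succ, SWeight_succ]
  ring

lemma secondDiff_two_mul_two_mul (p : ℝ) (a l : ℕ) :
    secondDiff p (2 * a) (2 * l) = 2 * 2 ^ p * secondDiff p a l := by
  rw [secondDiff, secondDiff, show 2 * a + 2 * (2 * l) = 2 * (a + 2 * l) by ring,
    show 2 * a + 2 * l = 2 * (a + l) by ring]
  simp only [SWeight_two_mul]
  push_cast
  ring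

lemma secondDiff_two_mul_add_one_two_mul (p : ℝ) (a l : ℕ) :
    secondDiff p (2 * a + 1) (2 * l) = 2 ^ p * (secondDiff p a l + secondDiff p (a + 1) l) := by
  simp only [secondDiff]
  rw [show 2 * a + 1 + 2 * (2 * l) = 2 * (a + 2 * l) + 1 by ring,
    show 2 * a + 1 + 2 * l = 2 * (a + l) + 1 by ring,
    show a + 1 + 2 * l = a + 2 * l + 1 by ring, show a + 1 + l = a + l + 1 by ring]
  simp only [SWeight_two_mul_add_one, SWeight_succ]
  push_cast
  ring

lemma secondDiff_two_mul_add_one_two_mul_add_one (p : ℝ) (a l : ℕ) :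
    secondDiff p (2 * a + 1) (2 * l + 1) =
      2 ^ p * (secondDiff p (a + 1) l + secondDiff p a (l + 1)) - 1 := by
  simp only [secondDiff]
  rw [show 2 * a + 1 + 2 * (2 * l + 1) = 2 * (a + 2 * l + 1) + 1 by ring,
    show 2 * a + 1 + (2 * l + 1) = 2 * (a + l + 1) by ring,
    show a + 1 + 2 * l = a + 2 * l + 1 by ring, show a + 1 + l = a + l + 1 by ring,
    show a + 2 * (l + 1) = a + 2 * l + 1 + 1 by ring, show a + (l + 1) = a + l + 1 by ring]
  simp only [SWeight_two_mul_add_one, SWeight_succ, SWeight_two_mul]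
  push_cast
  ring

lemma secondDiff_four_mul_two_mul_add_one (p : ℝ) (c l : ℕ) :
    secondDiff p (4 * c) (2 * l + 1) =
      2 ^ p * (secondDiff p (2 * c) l + secondDiff p (2 * c) (l + 1)) + 1 - 2 ^ p := by
  simp only [secondDiff]
  rw [show 4 * c + 2 * (2 * l + 1) = 2 * (2 * (c + l) + 1) by ring,
    show 4 * c + (2 * l + 1) = 2 * (2 * c + l) + 1 by ring, show 4 * c = 2 * (2 * c) by ring,
    show 2 * c + 2 * l = 2 * (c + l) by ring, show 2 * c + 2 * (l + 1) = 2 * (c + l + 1) by ring,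
    show 2 * c + (l + 1) = 2 * c + l + 1 by ring]
  simp only [SWeight_two_mul_add_one, SWeight_succ, SWeight_two_mul]
  push_cast
  ring

lemma secondDiff_four_mul_add_two_two_mul_add_one (p : ℝ) (c l : ℕ) :
    secondDiff p (4 * c + 2) (2 * l + 1) =
      2 ^ p * (secondDiff p (2 * c) (l + 1) + secondDiff p (2 * c + 2) l) + 1 - 2 ^ p := by
  simp only [secondDiff]
  rw [show 4 * c + 2 + 2 * (2 * l + 1) = 2 * (2 * (c + l + 1)) by ring,
    show 4 * c + 2 + (2 * l + 1) = 2 * (2 * c + l + 1) + 1 by ring,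
    show 4 * c + 2 = 2 * (2 * c + 1) by ring,
    show 2 * c + 2 * (l + 1) = 2 * (c + l + 1) by ring,
    show 2 * c + (l + 1) = 2 * c + l + 1 by ring,
    show 2 * c + 2 + 2 * l = 2 * (c + l + 1) by ring,
    show 2 * c + 2 + l = 2 * c + l + 1 + 1 by ring, show 2 * c + 2 = 2 * (c + 1) by ring]
  simp only [SWeight_two_mul_add_one, SWeight_succ, SWeight_two_mul]
  push_cast
  ring

-- The residues of `a` mod 4 give exact identities; for odd `a` the constant is `-1 ≤ 1 - 2^p`.
lemma exists_secondDiff_two_mul_add_one_le {p : ℝ} (hp : p ≤ 1) (a l : ℕ) :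
    ∃ b c, secondDiff p a (2 * l + 1) ≤
      2 ^ p * (secondDiff p b l + secondDiff p c (l + 1)) + 1 - 2 ^ p := by
  have h2p : (2 : ℝ) ^ p ≤ 2 := by simpa using Real.rpow_le_rpow_of_exponent_le one_le_two hp
  obtain ⟨a, rfl | rfl⟩ := Nat.even_or_odd' a
  · obtain ⟨c, rfl | rfl⟩ := Nat.even_or_odd' a
    · refine ⟨2 * c, 2 * c, ?_⟩
      rw [show 2 * (2 * c) = 4 * c by ring, secondDiff_four_mul_two_mul_add_one]
    · refine ⟨2 * c + 2, 2 * c, ?_⟩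
      rw [show 2 * (2 * c + 1) = 4 * c + 2 by ring, secondDiff_four_mul_add_two_two_mul_add_one]
      linarith
  · exact ⟨a + 1, a, by rw [secondDiff_two_mul_add_one_two_mul_add_one]; linarith⟩

lemma rpow_add_rpow_add_one_lt_two_mul_rpow {p : ℝ} (hp0 : 0 < p) (hp1 : p < 1) {x : ℝ}
    (hx : 0 ≤ x) : x ^ p + (x + 1) ^ p < 2 * (x + 1 / 2) ^ p := by
  have h := (Real.strictConcaveOn_rpow hp0 hp1).2 (Set.mem_Ici.2 hx)
    (Set.mem_Ici.2 (by linarith : 0 ≤ x + 1)) (by linarith : x ≠ x + 1)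
    one_half_pos one_half_pos (add_halves 1)
  rw [smul_eq_mul, smul_eq_mul, smul_eq_mul, smul_eq_mul,
    show 1 / 2 * x + 1 / 2 * (x + 1) = x + 1 / 2 by ring] at h
  linarith

lemma strictAntiOn_rpow_add_rpow_add_one_sub_two_mul_rpow {q : ℝ} (hq1 : 1 < q) (hq2 : q < 2) :
    StrictAntiOn (fun x : ℝ => x ^ q + (x + 1) ^ q - 2 * (x + 1 / 2) ^ q) (Set.Ici 0) := by
  have hderiv (x : ℝ) : HasDerivAt (fun x : ℝ => x ^ q + (x + 1) ^ q - 2 * (x + 1 / 2) ^ q)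
      (q * (x ^ (q - 1) + (x + 1) ^ (q - 1) - 2 * (x + 1 / 2) ^ (q - 1))) x := by
    have hpow (c : ℝ) : HasDerivAt (fun x : ℝ => (x + c) ^ q) (q * (x + c) ^ (q - 1)) x := by
      simpa using ((hasDerivAt_id x).add_const c).rpow_const (p := q) (Or.inr hq1.le)
    have h := ((hpow 0).add (hpow 1)).sub ((hpow (1 / 2)).const_mul 2)
    simp only [add_zero] at h
    exact h.congr_deriv (by ring)
  refine strictAntiOn_of_deriv_neg (convex_Ici 0)
    (fun x _ => (hderiv x).continuousAt.continuousWithinAt) fun x hx => ?_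
  rw [interior_Ici, Set.mem_Ioi] at hx
  rw [(hderiv x).deriv]
  have := rpow_add_rpow_add_one_lt_two_mul_rpow (by linarith : 0 < q - 1) (by linarith) hx.le
  nlinarith

lemma lt_two_mul_add_one_rpow {p : ℝ} (hp0 : 0 < p) (hp1 : p < 1) {x : ℝ} (hx : 0 < x) :
    2 ^ p * (x ^ (p + 1) + (x + 1) ^ (p + 1)) + 1 - 2 ^ p < (2 * x + 1) ^ (p + 1) := by
  have hanti := strictAntiOn_rpow_add_rpow_add_one_sub_two_mul_rpow
    (by linarith : 1 < p + 1) (by linarith : p + 1 < 2) (Set.mem_Ici.2 le_rfl)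
    (Set.mem_Ici.2 hx.le) hx
  have h2x : (2 * x + 1) ^ (p + 1) = 2 * 2 ^ p * (x + 1 / 2) ^ (p + 1) := by
    rw [show 2 * x + 1 = 2 * (x + 1 / 2) by ring, Real.mul_rpow zero_le_two (by positivity),
      Real.rpow_add_one two_ne_zero]
    ring
  have hhalf : 2 ^ p * (1 / 2 : ℝ) ^ (p + 1) = 1 / 2 := by
    rw [Real.div_rpow zero_le_one zero_le_two, Real.one_rpow, Real.rpow_add_one two_ne_zero]
    field_simp
  simp only [Real.zero_rpow (by linarith : p + 1 ≠ 0), zero_add, Real.one_rpow] at hanti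
  rw [h2x]
  nlinarith [Real.rpow_pos_of_pos two_pos p]

lemma natCast_two_mul_rpow_add_one (p : ℝ) (l : ℕ) :
    ((2 * l : ℕ) : ℝ) ^ (p + 1) = 2 * 2 ^ p * (l : ℝ) ^ (p + 1) := by
  rw [Nat.cast_mul, Nat.cast_two, Real.mul_rpow zero_le_two l.cast_nonneg,
    Real.rpow_add_one two_ne_zero]
  ring

lemma secondDiff_two_mul_add_one_lt {p : ℝ} (hp0 : 0 < p) (hp1 : p < 1) {l : ℕ} (hl : 1 ≤ l)
    (hle : ∀ a, secondDiff p a l ≤ (l : ℝ) ^ (p + 1))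
    (hle' : ∀ a, secondDiff p a (l + 1) ≤ ((l + 1 : ℕ) : ℝ) ^ (p + 1)) (a : ℕ) :
    secondDiff p a (2 * l + 1) < ((2 * l + 1 : ℕ) : ℝ) ^ (p + 1) := by
  obtain ⟨b, c, hbc⟩ := exists_secondDiff_two_mul_add_one_le hp1.le a l
  have hsum := mul_le_mul_of_nonneg_left (add_le_add (hle b) (hle' c))
    (Real.rpow_nonneg zero_le_two p)
  have hkey := lt_two_mul_add_one_rpow hp0 hp1 (x := l) (by exact_mod_cast hl)
  push_cast at hsum ⊢
  linarith

lemma two_mul_add_one_ne_two_pow {l : ℕ} (hl : 1 ≤ l) (j : ℕ) : 2 * l + 1 ≠ 2 ^ j := by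
  rcases j with _ | j
  · omega
  · rw [pow_succ]; omega

theorem secondDiff_le_rpow {p : ℝ} (hp0 : 0 < p) (hp1 : p < 1) {l : ℕ} (hl : 1 ≤ l)
    (a : ℕ) : secondDiff p a l ≤ (l : ℝ) ^ (p + 1) := by
  induction l using Nat.strong_induction_on generalizing a with
  | _ l ih =>
    obtain ⟨l, rfl | rfl⟩ := Nat.even_or_odd' l
    · obtain ⟨a, rfl | rfl⟩ := Nat.even_or_odd' a
      · rw [secondDiff_two_mul_two_mul, natCast_two_mul_rpow_add_one]
        exact mul_le_mul_of_nonneg_left (ih l (by omega) (by omega) a) (by positivity)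
      · rw [secondDiff_two_mul_add_one_two_mul, natCast_two_mul_rpow_add_one]
        nlinarith [ih l (by omega) (by omega) a, ih l (by omega) (by omega) (a + 1),
          Real.rpow_nonneg zero_le_two p]
    · rcases Nat.eq_zero_or_pos l with rfl | hl'
      · simpa [secondDiff_one] using sWeight_succ_sub_le hp1.le a
      · exact (secondDiff_two_mul_add_one_lt hp0 hp1 hl' (ih l (by omega) hl')
          (ih (l + 1) (by omega) (by omega)) a).le

theorem secondDiff_eq_rpow_iff {p : ℝ} (hp0 : 0 < p) (hp1 : p < 1) {l : ℕ} (hl : 1 ≤ l)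
    (a : ℕ) : secondDiff p a l = (l : ℝ) ^ (p + 1) ↔ (∃ j, l = 2 ^ j) ∧ 2 * l ∣ a := by
  induction l using Nat.strong_induction_on generalizing a with
  | _ l ih =>
    obtain ⟨l, rfl | rfl⟩ := Nat.even_or_odd' l
    · have hl' : 1 ≤ l := by omega
      have hpow : (∃ j, 2 * l = 2 ^ j) ↔ ∃ j, l = 2 ^ j := by
        refine ⟨fun ⟨j, hj⟩ => ?_,
          fun ⟨j, hj⟩ => ⟨j + 1, by rw [pow_succ, hj, mul_comm]⟩⟩
        rcases j with _ | j
        · omega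
        · exact ⟨j, by rw [pow_succ] at hj; omega⟩
      obtain ⟨a, rfl | rfl⟩ := Nat.even_or_odd' a
      · rw [secondDiff_two_mul_two_mul, natCast_two_mul_rpow_add_one,
          mul_right_inj' (by positivity), ih l (by omega) hl', hpow,
          Nat.mul_dvd_mul_iff_left two_pos]
      · refine iff_of_false (fun heq => ?_) fun ⟨_, hdvd⟩ => ?_
        · rw [secondDiff_two_mul_add_one_two_mul, natCast_two_mul_rpow_add_one] at heq
          have hsum : secondDiff p a l + secondDiff p (a + 1) l = 2 * (l : ℝ) ^ (p + 1) :=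
            mul_left_cancel₀ (Real.rpow_pos_of_pos two_pos p).ne' (by linarith)
          have h0 := secondDiff_le_rpow hp0 hp1 hl' a
          have h1 := secondDiff_le_rpow hp0 hp1 hl' (a + 1)
          have ha := ((ih l (by omega) hl' a).1 (by linarith)).2
          have ha1 := ((ih l (by omega) hl' (a + 1)).1 (by linarith)).2
          have := Nat.le_of_dvd one_pos ((Nat.dvd_add_right ha).1 ha1)
          omega
        · have := dvd_of_mul_right_dvd hdvd
          omega
    · rcases Nat.eq_zero_or_pos l with rfl | hl'
      · simp only [mul_zero, zero_add, secondDiff_one, Nat.cast_one, Real.one_rpow,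
          sWeight_succ_sub_eq_one_iff hp1, even_iff_two_dvd, mul_one, iff_and_self]
        exact fun _ => ⟨0, rfl⟩
      · exact iff_of_false (secondDiff_two_mul_add_one_lt hp0 hp1 hl'
          (secondDiff_le_rpow hp0 hp1 hl') (secondDiff_le_rpow hp0 hp1 (by omega)) a).ne
          fun ⟨⟨j, hj⟩, _⟩ => two_mul_add_one_ne_two_pow hl' j hj

theorem SWeight_midpoint_eq_iff_general (p : ℝ) (hp0 : 0 < p) (hp1 : p < 1)
    (m l : ℕ) (hlm : l ≤ m) (k : ℕ)
    (hk1 : l ≤ 2 ^ k) (hk2 : 2 ^ k < 2 * l) :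
    SWeight p (m + l) + SWeight p (m - l) - 2 * SWeight p m = (l:ℝ) ^ (p + 1)
      ↔ l = 2 ^ k ∧ m ≡ l [MOD 2 ^ (k + 1)] := by
  have hl : 1 ≤ l := by have := Nat.one_le_two_pow (n := k); omega
  have hdiff : secondDiff p (m - l) l =
      SWeight p (m + l) + SWeight p (m - l) - 2 * SWeight p m := by
    rw [secondDiff, show m - l + 2 * l = m + l by omega, Nat.sub_add_cancel hlm]
  rw [← hdiff, secondDiff_eq_rpow_iff hp0 hp1 hl, Nat.ModEq.comm, Nat.modEq_iff_dvd' hlm,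
    pow_succ, mul_comm _ 2]
  refine ⟨fun ⟨⟨j, hj⟩, hdvd⟩ => ?_,
    fun ⟨hlk, hdvd⟩ => ⟨⟨k, hlk⟩, hlk ▸ hdvd⟩⟩
  subst hj
  obtain rfl : j = k := le_antisymm ((Nat.pow_le_pow_iff_right one_lt_two).1 hk1)
    (Nat.lt_succ_iff.1 ((Nat.pow_lt_pow_iff_right one_lt_two).1 (by rwa [pow_succ, mul_comm])))
  exact ⟨rfl, hdvd⟩

theorem SWeight_midpoint_eq_iff (p : ℝ) (hp0 : 0 < p) (hp1 : p < 1)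
    (m l : ℕ) (hl : 1 ≤ l) (hlm : l ≤ m) (k : ℕ)
    (hk1 : l ≤ 2 ^ k) (hk2 : 2 ^ k < 2 * l) :
    SWeight p (m + l) + SWeight p (m - l) - 2 * SWeight p m = (l:ℝ) ^ (p + 1)
      ↔ l = 2 ^ k ∧ m ≡ l [MOD 2 ^ (k + 1)] :=
  SWeight_midpoint_eq_iff_general p hp0 hp1 m l hlm k hk1 hk2
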